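/- arXiv:1306.2405 — 8 statements merged into one kernel-verified Lean document; each statement's English description precedes it below -/
import Mathlib

section
/- Let f be an edge enumerator. For all edge-coloured graphs G and G', one has G ≅ G' if and only if the set of relabelled graphs { α(G) | v ∈ V_G, f(G,v) = (◁,α) } obtained by running f from every vertex of G equals the corresponding set { α'(G') | v' ∈ V_{G'}, f(G',v') = (◁',α') } obtained from every vertex of G'. -/
/-- An edge-coloured (multi)graph on vertex set `Fin n`: `col v w` is the set of
colours of directed edges from `v` to `w`. -/
structure ColGraph (C : Type) where
  n : ℕ
  col : Fin n → Fin n → Set C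

namespace ColGraph

variable {C : Type}

/-- The rigidity condition: for each vertex, distinct outgoing edges have distinct
colours and distinct incoming edges have distinct colours. -/
def Rigid (G : ColGraph C) : Prop :=
  (∀ (v w w' : Fin G.n) (c : C), c ∈ G.col v w → c ∈ G.col v w' → w = w') ∧
  (∀ (v w w' : Fin G.n) (c : C), c ∈ G.col w v → c ∈ G.col w' v → w = w')

/-- `φ` is an isomorphism of edge-coloured graphs from `G` to `G'`. -/
def IsIso (G G' : ColGraph C) (φ : Fin G.n ≃ Fin G'.n) : Prop :=
  ∀ v w : Fin G.n, G'.col (φ v) (φ w) = G.col v w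

/-- `G ≅ G'`. -/
def Iso (G G' : ColGraph C) : Prop := ∃ φ : Fin G.n ≃ Fin G'.n, IsIso G G' φ

/-- `(G,v) ≅ (G',v')`. -/
def IsoPt (G : ColGraph C) (v : Fin G.n) (G' : ColGraph C) (v' : Fin G'.n) : Prop :=
  ∃ φ : Fin G.n ≃ Fin G'.n, IsIso G G' φ ∧ φ v = v'

/-- The relabelled graph `α(G)`. -/
def relabel (G : ColGraph C) (α : Fin G.n ≃ Fin G.n) : ColGraph C where
  n := G.n
  col v w := G.col (α.symm v) (α.symm w)

/-- The DFA state set `S_G = V_G ∪ {⊥_v | v ∈ V_G}`: `Sum.inl v` is the vertex `v`,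
`Sum.inr v` is the sink state `⊥_v`. -/
abbrev State (G : ColGraph C) : Type := Fin G.n ⊕ Fin G.n

/-- Symbols: `Sum.inl c` is the colour `c`, `Sum.inr c` is the reverse colour `c⁻`. -/
abbrev Sym (C : Type) : Type := C ⊕ C

/-- Membership in the alphabet `Σ_G = C_G ∪ {c⁻ | c ∈ C_G}`, where `C_G` is the set of
colours of edges of `G`. -/
def InAlphabet (G : ColGraph C) : Sym C → Prop
  | Sum.inl c => ∃ v w, c ∈ G.col v w
  | Sum.inr c => ∃ v w, c ∈ G.col v w

open scoped Classical in
/-- The transition function `δ_G : S_G × Σ_G → S_G`. -/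
noncomputable def delta (G : ColGraph C) : State G → Sym C → State G
  | Sum.inl v, Sum.inl c =>
      if h : ∃ w, c ∈ G.col v w then Sum.inl h.choose else Sum.inr v
  | Sum.inl v, Sum.inr c =>
      if h : ∃ w, c ∈ G.col w v then Sum.inl h.choose else Sum.inr v
  | Sum.inr v, _ => Sum.inr v

/-- The extension `δ̂_G` of `δ_G` to words. -/
noncomputable def deltaHat (G : ColGraph C) (s : State G) (w : List (Sym C)) : State G :=
  w.foldl G.delta s

/-- Vertex bisimilarity `s ~_G s'`: for every word `w` over the alphabet `Σ_G`,
`δ̂_G(s,w) ∈ V_G ↔ δ̂_G(s',w) ∈ V_G`. -/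
def Bisim (G : ColGraph C) (s s' : State G) : Prop :=
  ∀ w : List (Sym C), (∀ x ∈ w, G.InAlphabet x) →
    ((G.deltaHat s w).isLeft = true ↔ (G.deltaHat s' w).isLeft = true)

/-- The underlying undirected (simple) graph of `G`. -/
def toSimple (G : ColGraph C) : SimpleGraph (Fin G.n) :=
  SimpleGraph.fromRel fun v w => (G.col v w).Nonempty

end ColGraph

/-- An edge enumerator: for each graph `G` and start vertex `v` it produces a total
order on the edges of `G` (represented as the duplicate-free list `ord G v` of all
edges of `G` listed in increasing order) together with a bijective vertex renaming
`ren G v`, such that whenever `(G,v) ≅ (G',v')`, the relabelled graphs agree and the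
renamed sorted lists of coloured edges agree. -/
structure EdgeEnumerator (C : Type) where
  ord : (G : ColGraph C) → Fin G.n → List (Fin G.n × Fin G.n)
  ren : (G : ColGraph C) → Fin G.n → (Fin G.n ≃ Fin G.n)
  ord_nodup : ∀ (G : ColGraph C) (v : Fin G.n), (ord G v).Nodup
  ord_mem : ∀ (G : ColGraph C) (v : Fin G.n) (e : Fin G.n × Fin G.n),
      e ∈ ord G v ↔ (G.col e.1 e.2).Nonempty
  invariant : ∀ (G G' : ColGraph C), G.Rigid → G'.Rigid →
      ∀ (v : Fin G.n) (v' : Fin G'.n), ColGraph.IsoPt G v G' v' →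
      ColGraph.relabel G (ren G v) = ColGraph.relabel G' (ren G' v') ∧
      (ord G v).map (fun e => (((ren G v e.1 : ℕ), (ren G v e.2 : ℕ)), G.col e.1 e.2))
        = (ord G' v').map
            (fun e => (((ren G' v' e.1 : ℕ), (ren G' v' e.2 : ℕ)), G'.col e.1 e.2))

namespace ColGraph

variable {C : Type}

theorem Iso.refl (G : ColGraph C) : Iso G G :=
  ⟨Equiv.refl _, fun _ _ => rfl⟩

theorem Iso.of_eq {G G' : ColGraph C} (h : G = G') : Iso G G' :=
  h ▸ Iso.refl G

theorem Iso.symm {G G' : ColGraph C} : Iso G G' → Iso G' G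
  | ⟨φ, hφ⟩ => ⟨φ.symm, fun v w => by simpa using (hφ (φ.symm v) (φ.symm w)).symm⟩

theorem Iso.trans {G₁ G₂ G₃ : ColGraph C} : Iso G₁ G₂ → Iso G₂ G₃ → Iso G₁ G₃
  | ⟨φ, hφ⟩, ⟨ψ, hψ⟩ => ⟨φ.trans ψ, fun v w => (hψ (φ v) (φ w)).trans (hφ v w)⟩

theorem Iso.of_isEmpty {G G' : ColGraph C} [IsEmpty (Fin G.n)] [IsEmpty (Fin G'.n)] :
    Iso G G' :=
  ⟨Equiv.equivOfIsEmpty _ _, fun v => isEmptyElim v⟩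

theorem iso_relabel (G : ColGraph C) (α : Fin G.n ≃ Fin G.n) : Iso G (relabel G α) :=
  ⟨α, fun v w => congrArg₂ G.col (α.symm_apply_apply v) (α.symm_apply_apply w)⟩

theorem Iso.of_relabel_eq {G G' : ColGraph C} {α : Fin G.n ≃ Fin G.n}
    {β : Fin G'.n ≃ Fin G'.n} (h : relabel G α = relabel G' β) : Iso G G' :=
  (iso_relabel G α).trans ((Iso.of_eq h).trans (iso_relabel G' β).symm)

end ColGraph

namespace EdgeEnumerator

open ColGraph

variable {C : Type} (f : EdgeEnumerator C) {G G' : ColGraph C}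

theorem relabel_ren_eq_of_isIso (hG : G.Rigid) (hG' : G'.Rigid) {φ : Fin G.n ≃ Fin G'.n}
    (hφ : IsIso G G' φ) (v : Fin G.n) :
    relabel G (f.ren G v) = relabel G' (f.ren G' (φ v)) :=
  (f.invariant G G' hG hG' v (φ v) ⟨φ, hφ, rfl⟩).1

theorem range_relabel_ren_eq_of_iso (hG : G.Rigid) (hG' : G'.Rigid) (h : Iso G G') :
    (Set.range fun v => relabel G (f.ren G v)) =
      Set.range fun v' => relabel G' (f.ren G' v') := by
  obtain ⟨φ, hφ⟩ := h
  simp_rw [f.relabel_ren_eq_of_isIso hG hG' hφ]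
  exact φ.surjective.range_comp fun v' => relabel G' (f.ren G' v')

theorem iso_of_range_relabel_ren_eq
    (h : (Set.range fun v => relabel G (f.ren G v)) =
      Set.range fun v' => relabel G' (f.ren G' v')) :
    Iso G G' := by
  rcases isEmpty_or_nonempty (Fin G.n) with hempty | ⟨⟨v⟩⟩
  · have : IsEmpty (Fin G'.n) := by
      rwa [← Set.range_eq_empty_iff, ← h, Set.range_eq_empty_iff]
    exact Iso.of_isEmpty
  · obtain ⟨v', hv'⟩ : relabel G (f.ren G v) ∈ Set.range fun v' => relabel G' (f.ren G' v') :=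
      h ▸ Set.mem_range_self v
    exact Iso.of_relabel_eq hv'.symm

end EdgeEnumerator

theorem stmt_1 {C : Type} (f : EdgeEnumerator C) (G G' : ColGraph C)
    (hG : G.Rigid) (hG' : G'.Rigid) :
    ColGraph.Iso G G' ↔
      (Set.range fun v : Fin G.n => ColGraph.relabel G (f.ren G v)) =
        (Set.range fun v' : Fin G'.n => ColGraph.relabel G' (f.ren G' v')) :=
  ⟨f.range_relabel_ren_eq_of_iso hG hG', f.iso_of_range_relabel_ren_eq⟩
end

section
/- Let G be an edge-coloured graph, let P and Q be equivalence classes of the state set S_G under the vertex-bisimilarity relation ~_G, and let x ∈ Σ_G. Suppose some s ∈ P satisfies δ_G(s,x) ∈ Q and δ_G(s,x) ∈ V_G. Then P ⊆ V_G, every s' ∈ P satisfies δ_G(s',x) ∈ Q ∩ V_G, the map s' ↦ δ_G(s',x) is injective on P, and hence |P| ≤ |Q|. -/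
/-! Prepending `x` to test words shows that bisimilarity is preserved by `δ(·, x)`, so the
whole class `P` is carried into `Q`, and into `V_G` because `s` is. Since the reverse symbol
undoes a transition into a vertex, rigidity makes `δ(·, x)` injective there. -/

namespace ColGraph

variable {C : Type} {G : ColGraph C}

theorem exists_mem_col_of_delta_inl_eq_inl {s : State G} {c : C} {w : Fin G.n}
    (h : G.delta s (.inl c) = .inl w) : ∃ v, s = .inl v ∧ c ∈ G.col v w := by
  rcases s with v | v
  · simp only [delta] at h
    split_ifs at h with hc
    cases h
    exact ⟨v, rfl, hc.choose_spec⟩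
  · cases h

theorem exists_mem_col_of_delta_inr_eq_inl {s : State G} {c : C} {w : Fin G.n}
    (h : G.delta s (.inr c) = .inl w) : ∃ v, s = .inl v ∧ c ∈ G.col w v := by
  rcases s with v | v
  · simp only [delta] at h
    split_ifs at h with hc
    cases h
    exact ⟨v, rfl, hc.choose_spec⟩
  · cases h

theorem isLeft_of_isLeft_delta {s : State G} {x : Sym C}
    (h : (G.delta s x).isLeft = true) : s.isLeft = true := by
  rcases s with v | v
  · rfl
  · cases x <;> simp [delta] at h

theorem inAlphabet_of_isLeft_delta {s : State G} {x : Sym C}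
    (h : (G.delta s x).isLeft = true) : G.InAlphabet x := by
  obtain ⟨w, hw⟩ := Sum.isLeft_iff.mp h
  rcases x with c | c
  · obtain ⟨v, -, hc⟩ := exists_mem_col_of_delta_inl_eq_inl hw
    exact ⟨v, w, hc⟩
  · obtain ⟨v, -, hc⟩ := exists_mem_col_of_delta_inr_eq_inl hw
    exact ⟨w, v, hc⟩

theorem Rigid.injOn_delta (hG : G.Rigid) (x : Sym C) :
    Set.InjOn (G.delta · x) {t | (G.delta t x).isLeft = true} := by
  intro t ht t' _ heq
  obtain ⟨w, hw⟩ := Sum.isLeft_iff.mp ht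
  have hw' : G.delta t' x = .inl w := heq.symm.trans hw
  rcases x with c | c
  · obtain ⟨v, rfl, hv⟩ := exists_mem_col_of_delta_inl_eq_inl hw
    obtain ⟨v', rfl, hv'⟩ := exists_mem_col_of_delta_inl_eq_inl hw'
    rw [hG.2 w v v' c hv hv']
  · obtain ⟨v, rfl, hv⟩ := exists_mem_col_of_delta_inr_eq_inl hw
    obtain ⟨v', rfl, hv'⟩ := exists_mem_col_of_delta_inr_eq_inl hw'
    rw [hG.1 w v v' c hv hv']

theorem Bisim.symm {s t : State G} (h : G.Bisim s t) : G.Bisim t s :=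
  fun w hw => (h w hw).symm

theorem Bisim.trans {s t u : State G} (hst : G.Bisim s t) (htu : G.Bisim t u) :
    G.Bisim s u :=
  fun w hw => (hst w hw).trans (htu w hw)

theorem Bisim.isLeft_iff {s t : State G} (h : G.Bisim s t) :
    s.isLeft = true ↔ t.isLeft = true :=
  h [] (List.forall_mem_nil _)

theorem Bisim.delta {s t : State G} {x : Sym C} (hx : G.InAlphabet x) (h : G.Bisim s t) :
    G.Bisim (G.delta s x) (G.delta t x) := fun w hw =>
  h (x :: w) (List.forall_mem_cons.mpr ⟨hx, hw⟩)

end ColGraph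

theorem stmt_5_general {C : Type} (G : ColGraph C) (hG : G.Rigid)
    (P Q : Set (ColGraph.State G))
    (hP : ∃ s₀ : ColGraph.State G, P = {t | G.Bisim s₀ t})
    (hQ : ∃ s₀ : ColGraph.State G, Q = {t | G.Bisim s₀ t})
    (x : ColGraph.Sym C)
    (s : ColGraph.State G) (hs : s ∈ P)
    (hsQ : G.delta s x ∈ Q) (hsV : (G.delta s x).isLeft = true) :
    (∀ t ∈ P, t.isLeft = true) ∧
    (∀ t ∈ P, G.delta t x ∈ Q ∧ (G.delta t x).isLeft = true) ∧
    Set.InjOn (fun t => G.delta t x) P ∧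
    P.ncard ≤ Q.ncard := by
  obtain ⟨p₀, rfl⟩ := hP
  obtain ⟨q₀, rfl⟩ := hQ
  have hx : G.InAlphabet x := ColGraph.inAlphabet_of_isLeft_delta hsV
  have hstep : ∀ t ∈ {t | G.Bisim p₀ t},
      G.delta t x ∈ {t | G.Bisim q₀ t} ∧ (G.delta t x).isLeft = true := fun t ht =>
    have hst := (hs.symm.trans ht).delta hx
    ⟨hsQ.trans hst, hst.isLeft_iff.mp hsV⟩
  have hinj : Set.InjOn (fun t => G.delta t x) {t | G.Bisim p₀ t} :=
    (hG.injOn_delta x).mono fun t ht => (hstep t ht).2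
  refine ⟨fun t ht => ColGraph.isLeft_of_isLeft_delta (hstep t ht).2, hstep, hinj, ?_⟩
  exact Set.ncard_le_ncard_of_injOn _ (fun t ht => (hstep t ht).1) hinj (Set.toFinite _)

theorem stmt_5 {C : Type} (G : ColGraph C) (hG : G.Rigid)
    (P Q : Set (ColGraph.State G))
    (hP : ∃ s₀ : ColGraph.State G, P = {t | G.Bisim s₀ t})
    (hQ : ∃ s₀ : ColGraph.State G, Q = {t | G.Bisim s₀ t})
    (x : ColGraph.Sym C) (hx : G.InAlphabet x)
    (s : ColGraph.State G) (hs : s ∈ P)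
    (hsQ : G.delta s x ∈ Q) (hsV : (G.delta s x).isLeft = true) :
    (∀ t ∈ P, t.isLeft = true) ∧
    (∀ t ∈ P, G.delta t x ∈ Q ∧ (G.delta t x).isLeft = true) ∧
    Set.InjOn (fun t => G.delta t x) P ∧
    P.ncard ≤ Q.ncard :=
  stmt_5_general G hG P Q hP hQ x s hs hsQ hsV
end

section
/- Let G be a connected edge-coloured graph. Then any two equivalence classes P and Q of the vertex set V_G under the vertex-bisimilarity relation ~_G have the same cardinality: |P| = |Q|. -/
/-! Reading a fixed word `w` that leads from `p` to `q` maps the class of `p` into the class of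
`q`: bisimilarity is preserved by reading `w`, so every vertex bisimilar to `p` stays on a vertex
after `w`, and the map is injective because rigidity lets every transition into a vertex be
undone. By symmetry the two classes have the same size. -/

namespace ColGraph

variable {C : Type} {G : ColGraph C}

lemma deltaHat_cons (s : G.State) (x : Sym C) (w : List (Sym C)) :
    G.deltaHat s (x :: w) = G.deltaHat (G.delta s x) w := rfl

lemma deltaHat_append (s : G.State) (w₁ w₂ : List (Sym C)) :
    G.deltaHat s (w₁ ++ w₂) = G.deltaHat (G.deltaHat s w₁) w₂ :=
  List.foldl_append

@[simp]
lemma delta_inr (v : Fin G.n) (x : Sym C) : G.delta (Sum.inr v) x = Sum.inr v := by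
  cases x <;> rfl

@[simp]
lemma deltaHat_inr (v : Fin G.n) (w : List (Sym C)) :
    G.deltaHat (Sum.inr v) w = Sum.inr v := by
  induction w with
  | nil => rfl
  | cons x w ih => rwa [deltaHat_cons, delta_inr]

lemma mem_col_of_delta_fwd {u v : Fin G.n} {c : C}
    (h : G.delta (Sum.inl u) (Sum.inl c) = Sum.inl v) : c ∈ G.col u v := by
  simp only [delta] at h
  split_ifs at h with he
  exact Sum.inl_injective h ▸ he.choose_spec

lemma mem_col_of_delta_bwd {u v : Fin G.n} {c : C}
    (h : G.delta (Sum.inl u) (Sum.inr c) = Sum.inl v) : c ∈ G.col v u := by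
  simp only [delta] at h
  split_ifs at h with he
  exact Sum.inl_injective h ▸ he.choose_spec

lemma delta_fwd_of_mem_col (hG : G.Rigid) {u v : Fin G.n} {c : C} (hc : c ∈ G.col u v) :
    G.delta (Sum.inl u) (Sum.inl c) = Sum.inl v := by
  have he : ∃ w, c ∈ G.col u w := ⟨v, hc⟩
  simp only [delta, dif_pos he]
  exact congrArg Sum.inl (hG.1 u _ v c he.choose_spec hc)

lemma delta_bwd_of_mem_col (hG : G.Rigid) {u v : Fin G.n} {c : C} (hc : c ∈ G.col v u) :
    G.delta (Sum.inl u) (Sum.inr c) = Sum.inl v := by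
  have he : ∃ w, c ∈ G.col w u := ⟨v, hc⟩
  simp only [delta, dif_pos he]
  exact congrArg Sum.inl (hG.2 u _ v c he.choose_spec hc)

lemma eq_of_delta_eq_inl (hG : G.Rigid) {s s' : G.State} {x : Sym C} {v : Fin G.n}
    (h : G.delta s x = Sum.inl v) (h' : G.delta s' x = Sum.inl v) : s = s' := by
  rcases s with u | u
  · rcases s' with u' | u'
    · congr 1
      rcases x with c | c
      · exact hG.2 v u u' c (mem_col_of_delta_fwd h) (mem_col_of_delta_fwd h')
      · exact hG.1 v u u' c (mem_col_of_delta_bwd h) (mem_col_of_delta_bwd h')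
    · simp at h'
  · simp at h

lemma eq_of_deltaHat_eq_inl (hG : G.Rigid) {s s' : G.State} {w : List (Sym C)} {v : Fin G.n}
    (h : G.deltaHat s w = Sum.inl v) (h' : G.deltaHat s' w = Sum.inl v) : s = s' := by
  induction w generalizing s s' with
  | nil => exact h.trans h'.symm
  | cons x w ih =>
    rw [deltaHat_cons] at h h'
    cases hd : G.delta s x with
    | inr u => simp [hd] at h
    | inl u => exact eq_of_delta_eq_inl hG hd (ih h h' ▸ hd)

lemma exists_word_deltaHat_eq (hG : G.Rigid) {u v : Fin G.n} (huv : G.toSimple.Reachable u v) :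
    ∃ w : List (Sym C), (∀ x ∈ w, G.InAlphabet x) ∧ G.deltaHat (Sum.inl u) w = Sum.inl v := by
  obtain ⟨walk⟩ := huv
  induction walk with
  | nil => exact ⟨[], by simp, rfl⟩
  | @cons a b _ hadj _ ih =>
    obtain ⟨w, hw, hdw⟩ := ih
    rw [toSimple, SimpleGraph.fromRel_adj] at hadj
    rcases hadj.2 with ⟨c, hc⟩ | ⟨c, hc⟩
    · refine ⟨Sum.inl c :: w, ?_, by rwa [deltaHat_cons, delta_fwd_of_mem_col hG hc]⟩
      exact List.forall_mem_cons.2 ⟨⟨a, b, hc⟩, hw⟩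
    · refine ⟨Sum.inr c :: w, ?_, by rwa [deltaHat_cons, delta_bwd_of_mem_col hG hc]⟩
      exact List.forall_mem_cons.2 ⟨⟨b, a, hc⟩, hw⟩

lemma Bisim.deltaHat {s s' : G.State} (h : G.Bisim s s') {w : List (Sym C)}
    (hw : ∀ x ∈ w, G.InAlphabet x) : G.Bisim (G.deltaHat s w) (G.deltaHat s' w) := by
  intro z hz
  rw [← deltaHat_append, ← deltaHat_append]
  exact h (w ++ z) fun x hx => (List.mem_append.1 hx).elim (hw x) (hz x)

variable (G) in
def vertexClass (v : Fin G.n) : Set (Fin G.n) := {v' | G.Bisim (Sum.inl v) (Sum.inl v')}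

lemma ncard_vertexClass_le (hG : G.Rigid) {p q : Fin G.n} (hpq : G.toSimple.Reachable p q) :
    (G.vertexClass p).ncard ≤ (G.vertexClass q).ncard := by
  obtain ⟨w, hw, hpw⟩ := exists_word_deltaHat_eq hG hpq
  set f : Fin G.n → Fin G.n := fun v => (G.deltaHat (Sum.inl v) w).elim id id
  have hf : ∀ v ∈ G.vertexClass p, G.deltaHat (Sum.inl v) w = Sum.inl (f v) := by
    intro v hv
    obtain ⟨v', hv'⟩ := Sum.isLeft_iff.1 ((hv w hw).1 (by rw [hpw]; rfl))
    simp [f, hv']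
  refine Set.ncard_le_ncard_of_injOn f (fun v hv => ?_) (fun v hv v' hv' hvv' => ?_)
  · have := (show G.Bisim _ _ from hv).deltaHat hw
    rwa [hpw, hf v hv] at this
  · exact Sum.inl_injective <| eq_of_deltaHat_eq_inl hG (hf v hv) (hvv' ▸ hf v' hv')

end ColGraph

theorem stmt_6 {C : Type} (G : ColGraph C) (hG : G.Rigid)
    (hconn : (ColGraph.toSimple G).Connected)
    (P Q : Set (Fin G.n))
    (hP : ∃ v₀ : Fin G.n, P = {v | G.Bisim (Sum.inl v₀) (Sum.inl v)})
    (hQ : ∃ v₀ : Fin G.n, Q = {v | G.Bisim (Sum.inl v₀) (Sum.inl v)}) :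
    P.ncard = Q.ncard := by
  obtain ⟨p, rfl⟩ := hP
  obtain ⟨q, rfl⟩ := hQ
  exact le_antisymm (ColGraph.ncard_vertexClass_le hG (hconn.preconnected p q))
    (ColGraph.ncard_vertexClass_le hG (hconn.preconnected q p))
end

section
/- There exists a connected edge-coloured graph G with at least two vertices in which all vertices are pairwise vertex-bisimilar (V_G/~_G consists of a single class) but not all vertices are pairwise related by automorphisms of G (the partition of V_G into automorphism orbits has at least two classes). A witness is the graph on vertices {1,2,3,4} with two colours b and r, b-coloured edges (1,2), (2,4), (4,3), (3,1) and r-coloured edges (1,2), (2,1), (3,4), (4,3). -/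
/-- The witness graph: vertices `{1,2,3,4}` (here `0,1,2,3 : Fin 4`), with colour
`b = true` on the edges `(1,2), (2,4), (4,3), (3,1)` and colour `r = false` on the
edges `(1,2), (2,1), (3,4), (4,3)`. -/
def witness : ColGraph Bool where
  n := 4
  col v w :=
    (if (v, w) ∈ ({(0, 1), (1, 3), (3, 2), (2, 0)} : Finset (Fin 4 × Fin 4)) then
        {true} else ∅) ∪
    (if (v, w) ∈ ({(0, 1), (1, 0), (2, 3), (3, 2)} : Finset (Fin 4 × Fin 4)) then
        {false} else ∅)

/-!
Every vertex of the witness has an outgoing and an incoming edge of each colour, so from a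
vertex the automaton never falls into a sink state and all vertices accept the same words.
Yet vertex `1` has an edge `(1,2)` carrying both colours, while no edge out of vertex `3`
carries both, so no automorphism maps `1` to `3`.
-/

namespace ColGraph

variable {C : Type} {G : ColGraph C}

def IsComplete (G : ColGraph C) : Prop :=
  ∀ (v : Fin G.n) (c : C), (∃ u w, c ∈ G.col u w) →
    (∃ w, c ∈ G.col v w) ∧ ∃ w, c ∈ G.col w v

lemma IsComplete.isLeft_delta (hG : G.IsComplete) (v : Fin G.n) {x : Sym C}
    (hx : G.InAlphabet x) : (G.delta (.inl v) x).isLeft := by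
  classical
  cases x with
  | inl c =>
    simp only [delta, dif_pos (hG v c hx).1, Sum.isLeft_inl]
  | inr c =>
    simp only [delta, dif_pos (hG v c hx).2, Sum.isLeft_inl]

lemma IsComplete.isLeft_deltaHat (hG : G.IsComplete) (v : Fin G.n) {w : List (Sym C)}
    (hw : ∀ x ∈ w, G.InAlphabet x) : (G.deltaHat (.inl v) w).isLeft := by
  induction w generalizing v with
  | nil => rfl
  | cons x w ih =>
    obtain ⟨u, hu⟩ := Sum.isLeft_iff.mp (hG.isLeft_delta v (hw x List.mem_cons_self))
    change (w.foldl G.delta (G.delta (.inl v) x)).isLeft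
    rw [hu]
    exact ih u fun y hy => hw y (List.mem_cons_of_mem x hy)

lemma IsComplete.bisim (hG : G.IsComplete) (v w : Fin G.n) : G.Bisim (.inl v) (.inl w) :=
  fun _ hword => by simp only [hG.isLeft_deltaHat v hword, hG.isLeft_deltaHat w hword]

lemma toSimple_adj_of_mem_col {v w : Fin G.n} {c : C} (hvw : v ≠ w) (hc : c ∈ G.col v w) :
    G.toSimple.Adj v w :=
  (SimpleGraph.fromRel_adj _ v w).2 ⟨hvw, .inl ⟨c, hc⟩⟩

lemma IsIso.exists_col_eq {G' : ColGraph C} {φ : Fin G.n ≃ Fin G'.n} (hφ : IsIso G G' φ)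
    (v w : Fin G.n) : ∃ w', G'.col (φ v) w' = G.col v w :=
  ⟨φ w, hφ v w⟩

end ColGraph

open ColGraph

-- `dsimp` with this retypes binders over `Fin witness.n` as `Fin 4`, where `decide` applies.
lemma witness_n : witness.n = 4 := rfl

lemma mem_witness_col (v w : Fin 4) (c : Bool) :
    c ∈ witness.col v w ↔
      (c = true ∧ (v, w) ∈ ({(0, 1), (1, 3), (3, 2), (2, 0)} : Finset (Fin 4 × Fin 4))) ∨
      (c = false ∧ (v, w) ∈ ({(0, 1), (1, 0), (2, 3), (3, 2)} : Finset (Fin 4 × Fin 4))) := by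
  change c ∈ (if _ then _ else _) ∪ (if _ then _ else _) ↔ _
  split_ifs <;> simp_all

lemma witness_rigid : witness.Rigid := by
  dsimp only [Rigid, witness_n]
  simp only [mem_witness_col]
  constructor <;> decide

lemma witness_isComplete : witness.IsComplete := by
  dsimp only [ColGraph.IsComplete, witness_n]
  simp only [mem_witness_col]
  decide

lemma witness_connected : witness.toSimple.Connected := by
  have reach (v w : Fin 4) (hvw : v ≠ w) (hc : true ∈ witness.col v w) :
      witness.toSimple.Reachable v w :=
    (toSimple_adj_of_mem_col hvw hc).reachable
  have h01 := reach 0 1 (by decide) (by simp [mem_witness_col])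
  have h20 := reach 2 0 (by decide) (by simp [mem_witness_col])
  have h13 := reach 1 3 (by decide) (by simp [mem_witness_col])
  refine (SimpleGraph.connected_iff_exists_forall_reachable _).2 ⟨(0 : Fin 4), fun w => ?_⟩
  fin_cases w
  exacts [.rfl, h01, h20.symm, h01.trans h13]

lemma not_isoPt_witness_zero_two : ¬ witness.IsoPt (0 : Fin 4) witness (2 : Fin 4) := by
  rintro ⟨φ, hφ, h02⟩
  obtain ⟨w, hw⟩ := hφ.exists_col_eq (0 : Fin 4) (1 : Fin 4)
  rw [h02] at hw
  have both : ∀ w : Fin 4,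
      true ∈ witness.col (2 : Fin 4) w → false ∈ witness.col (2 : Fin 4) w → False := by
    simp only [mem_witness_col]
    decide
  exact both w (hw ▸ by simp [mem_witness_col]) (hw ▸ by simp [mem_witness_col])

theorem stmt_7 :
    witness.Rigid ∧ 2 ≤ witness.n ∧ (ColGraph.toSimple witness).Connected ∧
    (∀ v w : Fin witness.n, witness.Bisim (Sum.inl v) (Sum.inl w)) ∧
    (∃ v w : Fin witness.n,
      ¬ ∃ φ : Fin witness.n ≃ Fin witness.n, ColGraph.IsIso witness witness φ ∧ φ v = w) :=
  ⟨witness_rigid, by decide, witness_connected, witness_isComplete.bisim,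
    (0 : Fin 4), (2 : Fin 4), not_isoPt_witness_zero_two⟩
end

section
/- For every site graph S₀, the encoding ρ(S₀) is a well-defined edge-coloured graph over the colour set C := P(S×S) ∪ N; in particular its colouring satisfies the rigidity condition: for each vertex, distinct outgoing edges of ρ(S₀) have distinct colours, and distinct incoming edges of ρ(S₀) have distinct colours. -/
/-- A site graph: vertices `Fin n`, undirected edges given as two-element sets of
(vertex, site) pairs, and a protein naming. -/
structure SiteGraph (N S : Type) where
  n : ℕ
  edges : Set (Set (Fin n × S))
  names : Fin n → N

namespace SiteGraph

variable {N S : Type}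

/-- Well-formedness of a site graph: every edge is a two-element set of
(vertex, site) pairs, distinct edges are disjoint, and the edge set is finite. -/
def Wf (S₀ : SiteGraph N S) : Prop :=
  (∀ e ∈ S₀.edges, ∃ p q : Fin S₀.n × S, p ≠ q ∧ e = {p, q}) ∧
  (∀ e ∈ S₀.edges, ∀ e' ∈ S₀.edges, e ≠ e' → e ∩ e' = ∅) ∧
  S₀.edges.Finite

/-- `φ` is a site-graph isomorphism from `S₀` to `S₁`. -/
def IsSIso (S₀ S₁ : SiteGraph N S) (φ : Fin S₀.n ≃ Fin S₁.n) : Prop :=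
  (∀ (v₁ v₂ : Fin S₀.n) (s₁ s₂ : S),
      ({(v₁, s₁), (v₂, s₂)} : Set (Fin S₀.n × S)) ∈ S₀.edges ↔
      ({(φ v₁, s₁), (φ v₂, s₂)} : Set (Fin S₁.n × S)) ∈ S₁.edges) ∧
  ∀ v : Fin S₀.n, S₀.names v = S₁.names (φ v)

/-- `S₀ ≅ S₁` as site graphs. -/
def SIso (S₀ S₁ : SiteGraph N S) : Prop := ∃ φ, IsSIso S₀ S₁ φ

variable [LinearOrder S]

/-- The set of site pairs `(s,s')` with `{(v,s),(w,s')} ∈ E`. -/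
def link (S₀ : SiteGraph N S) (v w : Fin S₀.n) : Set (S × S) :=
  {p | ({(v, p.1), (w, p.2)} : Set (Fin S₀.n × S)) ∈ S₀.edges}

/-- Strict lexicographic order on site pairs. -/
def lexLt (p q : S × S) : Prop := p.1 < q.1 ∨ (p.1 = q.1 ∧ p.2 < q.2)

/-- The directed edge relation of the encoding `ρ`: every loop `(v,v)` is an edge, and
for `v ≠ w`, `(v,w)` is an edge iff the lexicographically least pair `(s,s')` with
`{(v,s),(w,s')} ∈ E` satisfies `s ≤ s'`. -/
def dirEdge (S₀ : SiteGraph N S) (v w : Fin S₀.n) : Prop :=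
  v = w ∨ (v ≠ w ∧ ∃ p ∈ S₀.link v w,
    (∀ q ∈ S₀.link v w, p = q ∨ lexLt p q) ∧ p.1 ≤ p.2)

/-- The colour of the directed edge `(v,w)` in the encoding `ρ`: the set of site
pairs linking `v` to `w`, together with the protein name `ν(v)` if `v = w`. -/
def colourOf (S₀ : SiteGraph N S) (v w : Fin S₀.n) : Set ((S × S) ⊕ N) :=
  (Sum.inl '' S₀.link v w) ∪ (if v = w then {Sum.inr (S₀.names v)} else ∅)

/-- The encoding `ρ` of site graphs into edge-coloured graphs over the colour set
consisting of sets of elements of `(S × S) ⊕ N`. -/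
def rho (S₀ : SiteGraph N S) : ColGraph (Set ((S × S) ⊕ N)) where
  n := S₀.n
  col v w := {c | S₀.dirEdge v w ∧ c = S₀.colourOf v w}

end SiteGraph

/-! Every edge of `ρ(S₀)` carries a nonempty colour, and any single element of a colour
already determines the edge from either endpoint: a name `ν(v)` occurs only on the loop at
`v`, and a site pair `(s, s')` at `v` determines the other endpoint because distinct edges
of a site graph are disjoint, so `(v, s)` lies on at most one of them. -/

theorem Set.PairwiseDisjoint.eq_of_pair_mem {α : Type*} {E : Set (Set α)}
    (hE : E.PairwiseDisjoint id) {x y z : α} (hy : {x, y} ∈ E) (hz : {x, z} ∈ E) :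
    y = z := by
  have hyz : ({x, y} : Set α) = {x, z} := by
    by_contra hne
    exact Set.disjoint_left.1 (hE hy hz hne) (Set.mem_insert x _) (Set.mem_insert x _)
  rcases Set.pair_eq_pair_iff.1 hyz with ⟨-, rfl⟩ | ⟨rfl, rfl⟩ <;> rfl

namespace SiteGraph

variable {N S : Type} {S₀ : SiteGraph N S}

theorem Wf.pairwiseDisjoint (h : S₀.Wf) : S₀.edges.PairwiseDisjoint id :=
  fun _ he _ he' hne => Set.disjoint_iff_inter_eq_empty.2 (h.2.1 _ he _ he' hne)

theorem mem_link_comm {v w : Fin S₀.n} {p : S × S} :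
    p ∈ S₀.link v w ↔ p.swap ∈ S₀.link w v := by
  change _ ∈ S₀.edges ↔ _ ∈ S₀.edges
  rw [Set.pair_comm]
  rfl

theorem Wf.eq_of_mem_link_right (h : S₀.Wf) {v w w' : Fin S₀.n} {p : S × S}
    (hw : p ∈ S₀.link v w) (hw' : p ∈ S₀.link v w') : w = w' :=
  congrArg Prod.fst (h.pairwiseDisjoint.eq_of_pair_mem hw hw')

theorem Wf.eq_of_mem_link_left (h : S₀.Wf) {v w w' : Fin S₀.n} {p : S × S}
    (hw : p ∈ S₀.link w v) (hw' : p ∈ S₀.link w' v) : w = w' :=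
  h.eq_of_mem_link_right (mem_link_comm.1 hw) (mem_link_comm.1 hw')

theorem inl_mem_colourOf {v w : Fin S₀.n} {p : S × S} :
    Sum.inl p ∈ S₀.colourOf v w ↔ p ∈ S₀.link v w := by
  unfold colourOf
  split_ifs <;> simp

theorem inr_mem_colourOf {v w : Fin S₀.n} {a : N} :
    Sum.inr a ∈ S₀.colourOf v w ↔ v = w ∧ a = S₀.names v := by
  unfold colourOf
  split_ifs with hvw <;> simp [hvw]

theorem colourOf_nonempty [LinearOrder S] {v w : Fin S₀.n} (hd : S₀.dirEdge v w) :
    (S₀.colourOf v w).Nonempty := by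
  rcases hd with rfl | ⟨-, p, hp, -⟩
  · exact ⟨Sum.inr (S₀.names v), inr_mem_colourOf.2 ⟨rfl, rfl⟩⟩
  · exact ⟨Sum.inl p, inl_mem_colourOf.2 hp⟩

theorem Wf.eq_of_mem_colourOf_right (h : S₀.Wf) {v w w' : Fin S₀.n} {c : (S × S) ⊕ N}
    (hw : c ∈ S₀.colourOf v w) (hw' : c ∈ S₀.colourOf v w') : w = w' := by
  cases c with
  | inl p => exact h.eq_of_mem_link_right (inl_mem_colourOf.1 hw) (inl_mem_colourOf.1 hw')
  | inr a => exact (inr_mem_colourOf.1 hw).1.symm.trans (inr_mem_colourOf.1 hw').1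

theorem Wf.eq_of_mem_colourOf_left (h : S₀.Wf) {v w w' : Fin S₀.n} {c : (S × S) ⊕ N}
    (hw : c ∈ S₀.colourOf w v) (hw' : c ∈ S₀.colourOf w' v) : w = w' := by
  cases c with
  | inl p => exact h.eq_of_mem_link_left (inl_mem_colourOf.1 hw) (inl_mem_colourOf.1 hw')
  | inr a => exact (inr_mem_colourOf.1 hw).1.trans (inr_mem_colourOf.1 hw').1.symm

end SiteGraph

theorem stmt_10 {N S : Type} [LinearOrder S] (S₀ : SiteGraph N S) (h : S₀.Wf) :
    (SiteGraph.rho S₀).Rigid := by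
  constructor
  · rintro v w w' c ⟨hd, rfl⟩ ⟨-, hc⟩
    obtain ⟨x, hx⟩ := SiteGraph.colourOf_nonempty hd
    exact h.eq_of_mem_colourOf_right hx (hc ▸ hx)
  · rintro v w w' c ⟨hd, rfl⟩ ⟨-, hc⟩
    obtain ⟨x, hx⟩ := SiteGraph.colourOf_nonempty hd
    exact h.eq_of_mem_colourOf_left hx (hc ▸ hx)
end

section
/- Let S₀ and S₁ be site graphs and let φ be a site-graph isomorphism from S₀ to S₁. Then the same bijection φ is an isomorphism of edge-coloured graphs from ρ(S₀) to ρ(S₁). -/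
namespace SiteGraph.IsSIso

variable {N S : Type} {S₀ S₁ : SiteGraph N S} {φ : Fin S₀.n ≃ Fin S₁.n}

theorem link_eq (hφ : IsSIso S₀ S₁ φ) (v w : Fin S₀.n) :
    S₁.link (φ v) (φ w) = S₀.link v w := by
  ext p
  exact (hφ.1 v w p.1 p.2).symm

theorem colourOf_eq (hφ : IsSIso S₀ S₁ φ) (v w : Fin S₀.n) :
    S₁.colourOf (φ v) (φ w) = S₀.colourOf v w := by
  simp only [colourOf, hφ.link_eq, φ.injective.eq_iff, ← hφ.2 v]

variable [LinearOrder S]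

theorem dirEdge_iff (hφ : IsSIso S₀ S₁ φ) (v w : Fin S₀.n) :
    S₁.dirEdge (φ v) (φ w) ↔ S₀.dirEdge v w := by
  simp only [dirEdge, hφ.link_eq, Ne, φ.injective.eq_iff]

end SiteGraph.IsSIso

theorem stmt_12_general {N S : Type} [LinearOrder S] (S₀ S₁ : SiteGraph N S)
    (φ : Fin S₀.n ≃ Fin S₁.n) (hφ : SiteGraph.IsSIso S₀ S₁ φ) :
    ColGraph.IsIso (SiteGraph.rho S₀) (SiteGraph.rho S₁) φ := fun v w =>
  Set.ext fun _ => and_congr (hφ.dirEdge_iff v w) (Eq.congr_right (hφ.colourOf_eq v w))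

theorem stmt_12 {N S : Type} [LinearOrder S] (S₀ S₁ : SiteGraph N S)
    (h₀ : S₀.Wf) (h₁ : S₁.Wf)
    (φ : Fin S₀.n ≃ Fin S₁.n) (hφ : SiteGraph.IsSIso S₀ S₁ φ) :
    ColGraph.IsIso (SiteGraph.rho S₀) (SiteGraph.rho S₁) φ :=
  stmt_12_general S₀ S₁ φ hφ
end

section
/- The encoding ρ respects isomorphism: for all site graphs S₀ and S₁, S₀ ≅ S₁ as site graphs if and only if ρ(S₀) ≅ ρ(S₁) as edge-coloured graphs. -/
/-!
The colour `λ'(v,w)` records the set of site pairs linking `v` to `w` and, on loops, the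
name `ν(v)`, so an isomorphism of encodings transports links and names along every
directed edge it sees. The only information the encoding drops is the direction of the
edge between two linked vertices. When the links are finite, at least one direction
survives: if the lexicographically least pairs `p` of `link v w` and `q` of `link w v`
were both decreasing, minimality against `q.swap` and `p.swap` would give
`q.1 ≤ p.2 < p.1 ≤ q.2 < q.1`. Since `link w v` is the swap of `link v w`, one direction
determines the other.
-/

namespace ColGraph

variable {C : Type}

lemma IsIso.symm {G G' : ColGraph C} {φ : Fin G.n ≃ Fin G'.n} (h : IsIso G G' φ) :
    IsIso G' G φ.symm := fun v w => by
  simpa using (h (φ.symm v) (φ.symm w)).symm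

end ColGraph

namespace SiteGraph

variable {N S : Type}

lemma isSIso_iff {S₀ S₁ : SiteGraph N S} {φ : Fin S₀.n ≃ Fin S₁.n} :
    IsSIso S₀ S₁ φ ↔
      (∀ v w, S₁.link (φ v) (φ w) = S₀.link v w) ∧ ∀ v, S₀.names v = S₁.names (φ v) := by
  refine and_congr_left' ⟨fun h v w => ?_, fun h v w s₁ s₂ => ?_⟩
  · ext p
    exact (h v w p.1 p.2).symm
  · exact (Set.ext_iff.1 (h v w) (s₁, s₂)).symm

variable (G : SiteGraph N S)

lemma link_comm (v w : Fin G.n) : G.link w v = Prod.swap ⁻¹' G.link v w := by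
  ext p
  simp only [link, Set.mem_preimage, Set.mem_ofPred_eq, Prod.fst_swap, Prod.snd_swap,
    Set.pair_comm]

lemma link_finite (hfin : G.edges.Finite) {v w : Fin G.n} (hvw : v ≠ w) :
    (G.link v w).Finite := by
  refine Set.Finite.of_finite_image (f := fun p => {(v, p.1), (w, p.2)})
    (hfin.subset ?_) fun p _ q _ hpq => ?_
  · rintro _ ⟨p, hp, rfl⟩
    exact hp
  · rcases Set.pair_eq_pair_iff.1 hpq with ⟨h₁, h₂⟩ | ⟨h₁, -⟩
    · exact Prod.ext (Prod.ext_iff.1 h₁).2 (Prod.ext_iff.1 h₂).2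
    · exact absurd (congrArg Prod.fst h₁) hvw

lemma preimage_inl_colourOf (v w : Fin G.n) : Sum.inl ⁻¹' G.colourOf v w = G.link v w := by
  ext p
  by_cases h : v = w <;> simp [colourOf, h]

lemma preimage_inr_colourOf_self (v : Fin G.n) : Sum.inr ⁻¹' G.colourOf v v = {G.names v} := by
  ext a
  simp [colourOf]

variable [LinearOrder S]

lemma lexLt_iff {p q : S × S} : lexLt p q ↔ toLex p < toLex q :=
  Prod.Lex.toLex_lt_toLex.symm

lemma eq_or_lexLt_iff {p q : S × S} : p = q ∨ lexLt p q ↔ toLex p ≤ toLex q := by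
  rw [lexLt_iff, le_iff_eq_or_lt, toLex_inj]

lemma fst_le_fst_of_eq_or_lexLt {p q : S × S} (h : p = q ∨ lexLt p q) : p.1 ≤ q.1 :=
  Prod.Lex.monotone_fst _ _ (eq_or_lexLt_iff.1 h)

lemma exists_lexLeast {s : Set (S × S)} (hs : s.Finite) (hne : s.Nonempty) :
    ∃ p ∈ s, ∀ q ∈ s, p = q ∨ lexLt p q := by
  obtain ⟨p, hp, hmin⟩ := Set.exists_min_image s toLex hs hne
  exact ⟨p, hp, fun q hq => eq_or_lexLt_iff.2 (hmin q hq)⟩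

lemma dirEdge_self (v : Fin G.n) : G.dirEdge v v := Or.inl rfl

lemma dirEdge_or_dirEdge (hfin : G.edges.Finite) {v w : Fin G.n} (hvw : v ≠ w)
    (hne : (G.link v w).Nonempty) : G.dirEdge v w ∨ G.dirEdge w v := by
  obtain ⟨p, hp, hp_min⟩ := exists_lexLeast (G.link_finite hfin hvw) hne
  have hp_swap : p.swap ∈ G.link w v := by rwa [link_comm, Set.mem_preimage, Prod.swap_swap]
  obtain ⟨q, hq, hq_min⟩ := exists_lexLeast (G.link_finite hfin hvw.symm) ⟨_, hp_swap⟩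
  have hq_swap : q.swap ∈ G.link v w := by rwa [← Set.mem_preimage, ← link_comm]
  by_contra! h
  have hp_dec : p.2 < p.1 := not_le.1 fun hle => h.1 (Or.inr ⟨hvw, p, hp, hp_min, hle⟩)
  have hq_dec : q.2 < q.1 := not_le.1 fun hle => h.2 (Or.inr ⟨hvw.symm, q, hq, hq_min, hle⟩)
  have hpq : p.1 ≤ q.2 := fst_le_fst_of_eq_or_lexLt (hp_min _ hq_swap)
  have hqp : q.1 ≤ p.2 := fst_le_fst_of_eq_or_lexLt (hq_min _ hp_swap)
  exact lt_irrefl q.1 (((hqp.trans_lt hp_dec).trans_le hpq).trans hq_dec)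

variable {G}

lemma rho_isIso_of_isSIso {G' : SiteGraph N S} {φ : Fin G.n ≃ Fin G'.n} (hφ : IsSIso G G' φ) :
    ColGraph.IsIso G.rho G'.rho φ := by
  obtain ⟨hlink, hnames⟩ := isSIso_iff.1 hφ
  intro (v : Fin G.n) (w : Fin G.n)
  have hdir : G'.dirEdge (φ v) (φ w) ↔ G.dirEdge v w := by
    simp only [dirEdge, hlink, ne_eq, φ.injective.eq_iff]
  have hcol : G'.colourOf (φ v) (φ w) = G.colourOf v w := by
    simp only [colourOf, hlink, φ.injective.eq_iff, hnames]
  ext c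
  exact and_congr hdir (hcol ▸ Iff.rfl)

lemma colourOf_eq_of_isIso {G' : SiteGraph N S} {φ : Fin G.n ≃ Fin G'.n}
    (hφ : ColGraph.IsIso G.rho G'.rho φ) {v w : Fin G.n} (hvw : G.dirEdge v w) :
    G'.colourOf (φ v) (φ w) = G.colourOf v w := by
  have hmem : G.colourOf v w ∈ G'.rho.col (φ v) (φ w) := by
    rw [show G'.rho.col (φ v) (φ w) = G.rho.col v w from hφ v w]
    exact ⟨hvw, rfl⟩
  exact hmem.2.symm

lemma link_eq_of_isIso_of_nonempty (hfin : G.edges.Finite) {G' : SiteGraph N S}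
    {φ : Fin G.n ≃ Fin G'.n} (hφ : ColGraph.IsIso G.rho G'.rho φ) {v w : Fin G.n}
    (hne : (G.link v w).Nonempty) : G'.link (φ v) (φ w) = G.link v w := by
  have link_eq : ∀ {a b}, G.dirEdge a b → G'.link (φ a) (φ b) = G.link a b := fun h => by
    rw [← preimage_inl_colourOf, colourOf_eq_of_isIso hφ h, preimage_inl_colourOf]
  obtain rfl | hvw := eq_or_ne v w
  · exact link_eq (G.dirEdge_self v)
  rcases G.dirEdge_or_dirEdge hfin hvw hne with h | h
  · exact link_eq h
  · rw [link_comm, link_eq h, ← link_comm]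

lemma isSIso_of_rho_isIso {G' : SiteGraph N S} (hfin : G.edges.Finite)
    (hfin' : G'.edges.Finite) {φ : Fin G.n ≃ Fin G'.n} (hφ : ColGraph.IsIso G.rho G'.rho φ) :
    IsSIso G G' φ := by
  refine isSIso_iff.2 ⟨fun v w => ?_, fun v => ?_⟩
  · by_cases hne : (G.link v w).Nonempty
    · exact link_eq_of_isIso_of_nonempty hfin hφ hne
    by_cases hne' : (G'.link (φ v) (φ w)).Nonempty
    · convert (link_eq_of_isIso_of_nonempty hfin' hφ.symm hne').symm using 2 <;>
        exact (φ.symm_apply_apply _).symm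
    rw [Set.not_nonempty_iff_eq_empty.1 hne, Set.not_nonempty_iff_eq_empty.1 hne']
  · have h := congrArg (Sum.inr ⁻¹' ·) (colourOf_eq_of_isIso hφ (G.dirEdge_self v))
    simpa only [preimage_inr_colourOf_self, Set.singleton_eq_singleton_iff, eq_comm] using h

end SiteGraph

theorem stmt_13 {N S : Type} [LinearOrder S] (S₀ S₁ : SiteGraph N S)
    (h₀ : S₀.Wf) (h₁ : S₁.Wf) :
    SiteGraph.SIso S₀ S₁ ↔ ColGraph.Iso (SiteGraph.rho S₀) (SiteGraph.rho S₁) :=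
  ⟨fun ⟨φ, hφ⟩ => ⟨φ, SiteGraph.rho_isIso_of_isSIso hφ⟩,
    fun ⟨φ, hφ⟩ => ⟨φ, SiteGraph.isSIso_of_rho_isIso h₀.2.2 h₁.2.2 hφ⟩⟩
end

section
/- For every site graph S₀, the encoding has linear size: the vertex set of ρ(S₀) equals the vertex set of S₀, and the number of directed edges of ρ(S₀) satisfies |E_{ρ(S₀)}| ≤ |V_{S₀}| + 2·|E_{S₀}|. -/
theorem Set.fsts_eq_or_swap_of_pair_eq {α β : Type*} {v w v' w' : α} {s s' t t' : β}
    (h : ({(v, s), (w, s')} : Set (α × β)) = {(v', t), (w', t')}) :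
    (v, w) = (v', w') ∨ (v, w) = (w', v') := by
  rcases Set.pair_eq_pair_iff.mp h with ⟨hv, hw⟩ | ⟨hv, hw⟩
  · exact .inl (Prod.ext (Prod.mk.inj hv).1 (Prod.mk.inj hw).1)
  · exact .inr (Prod.ext (Prod.mk.inj hv).1 (Prod.mk.inj hw).1)

theorem Set.ncard_diagonal (α : Type*) : (Set.diagonal α).ncard = Nat.card α := by
  rw [← Set.range_diag]
  exact Set.ncard_range_of_injective Function.diag_injective

namespace SiteGraph

variable {N S : Type} (S₀ : SiteGraph N S)

def linkedPairs : Set (Fin S₀.n × Fin S₀.n) :=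
  {x : Fin S₀.n × Fin S₀.n | x.1 ≠ x.2 ∧ (S₀.link x.1 x.2).Nonempty}

theorem ncard_linkedPairs_le (hfin : S₀.edges.Finite) :
    S₀.linkedPairs.ncard ≤ 2 * S₀.edges.ncard := by
  have hjoin : ∀ x ∈ S₀.linkedPairs,
      ∃ e ∈ S₀.edges, ∃ s s' : S, e = {(x.1, s), (x.2, s')} :=
    fun _ ⟨_, p, hp⟩ => ⟨_, hp, p.1, p.2, rfl⟩
  -- An edge joins at most one unordered pair of vertices, so the edge chosen for `(v, w)`
  -- together with the bit `v < w` determines `(v, w)`.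
  choose! e he _ _ hes using hjoin
  have hinj : Set.InjOn (fun x => (e x, decide (x.1 < x.2)))
      S₀.linkedPairs := by
    intro x hx y hy hxy
    simp only [Prod.mk.injEq] at hxy
    obtain ⟨hedge, hlt⟩ := hxy
    rw [hes x hx, hes y hy] at hedge
    rcases Set.fsts_eq_or_swap_of_pair_eq hedge with hxy | hswap
    · exact hxy
    · simp only [Prod.mk.injEq] at hswap
      rw [hswap.1, hswap.2] at hlt
      rcases lt_or_gt_of_ne hy.1 with h | h <;> simp [h, not_lt_of_gt h] at hlt
  calc _ ≤ (S₀.edges ×ˢ (Set.univ : Set Bool)).ncard :=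
        Set.ncard_le_ncard_of_injOn _ (fun x hx => ⟨he x hx, trivial⟩) hinj
          (hfin.prod Set.finite_univ)
    _ = 2 * S₀.edges.ncard := by
        rw [Set.ncard_prod, Set.ncard_univ, Nat.card_eq_fintype_card, Fintype.card_bool,
          mul_comm]

variable [LinearOrder S]

theorem rho_col_nonempty_iff (v w : Fin S₀.n) :
    (S₀.rho.col v w).Nonempty ↔ S₀.dirEdge v w :=
  ⟨fun ⟨_, hd, _⟩ => hd, fun hd => ⟨_, hd, rfl⟩⟩

theorem link_nonempty_of_dirEdge {v w : Fin S₀.n} (hd : S₀.dirEdge v w) (hvw : v ≠ w) :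
    (S₀.link v w).Nonempty := by
  rcases hd with heq | ⟨-, p, hp, -⟩
  · exact absurd heq hvw
  · exact ⟨p, hp⟩

end SiteGraph

theorem stmt_14 {N S : Type} [LinearOrder S] (S₀ : SiteGraph N S) (h : S₀.Wf) :
    (SiteGraph.rho S₀).n = S₀.n ∧
    {e : Fin (SiteGraph.rho S₀).n × Fin (SiteGraph.rho S₀).n |
        ((SiteGraph.rho S₀).col e.1 e.2).Nonempty}.ncard
      ≤ S₀.n + 2 * S₀.edges.ncard := by
  refine ⟨rfl, ?_⟩
  have hsplit : {e : Fin S₀.n × Fin S₀.n | (S₀.rho.col e.1 e.2).Nonempty} ⊆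
      Set.diagonal (Fin S₀.n) ∪ S₀.linkedPairs := by
    intro x hx
    by_cases hloop : x.1 = x.2
    · exact .inl hloop
    · exact .inr ⟨hloop,
        S₀.link_nonempty_of_dirEdge ((S₀.rho_col_nonempty_iff _ _).mp hx) hloop⟩
  calc _ ≤ _ := Set.ncard_le_ncard hsplit
    _ ≤ _ := Set.ncard_union_le _ _
    _ ≤ S₀.n + 2 * S₀.edges.ncard := by
        gcongr
        · simp [Set.ncard_diagonal]
        · exact S₀.ncard_linkedPairs_le h.2.2
end
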